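/- arXiv:1905.03048 — 9 statements merged into one kernel-verified Lean document; each statement's English description precedes it below -/
import Mathlib

section
/- Let T > 0 and p ∈ ℝ. Suppose x, y : [0, T] → ℝ are differentiable, y(t) > 0 for all t ∈ [0, T], x(0) = 0, y(0) = 1, and for all t ∈ [0, T]: y'(t) = −2·y(t)/(p² + y(t)²) and x'(t) = 2p/(p² + y(t)²). Then 2p²·log y(T) + y(T)² = 1 − 4T and x(T) = −p·log y(T). -/
theorem stmt_1 (T p : ℝ) (hT : 0 < T) (x y : ℝ → ℝ)
    (hy : ∀ t ∈ Set.Icc (0:ℝ) T, 0 < y t)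
    (hx0 : x 0 = 0) (hy0 : y 0 = 1)
    (hdy : ∀ t ∈ Set.Icc (0:ℝ) T,
      HasDerivWithinAt y (-2 * y t / (p ^ 2 + (y t) ^ 2)) (Set.Icc 0 T) t)
    (hdx : ∀ t ∈ Set.Icc (0:ℝ) T,
      HasDerivWithinAt x (2 * p / (p ^ 2 + (y t) ^ 2)) (Set.Icc 0 T) t) :
    2 * p ^ 2 * Real.log (y T) + (y T) ^ 2 = 1 - 4 * T ∧
      x T = -p * Real.log (y T) := by
  have hTmem : T ∈ Set.Icc (0:ℝ) T := Set.right_mem_Icc.2 hT.le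
  have h0mem : (0:ℝ) ∈ Set.Icc (0:ℝ) T := Set.left_mem_Icc.2 hT.le
  have hud : UniqueDiffOn ℝ (Set.Icc (0:ℝ) T) := uniqueDiffOn_Icc hT
  have hden : ∀ t ∈ Set.Icc (0:ℝ) T, p ^ 2 + (y t) ^ 2 ≠ 0 := fun t ht =>
    ne_of_gt (add_pos_of_nonneg_of_pos (sq_nonneg p) (pow_pos (hy t ht) 2))
  -- first function
  set f : ℝ → ℝ := fun t => 2 * p ^ 2 * Real.log (y t) + (y t) ^ 2 + 4 * t with hf
  have hdf : ∀ t ∈ Set.Icc (0:ℝ) T, HasDerivWithinAt f 0 (Set.Icc 0 T) t := by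
    intro t ht
    have hne : y t ≠ 0 := ne_of_gt (hy t ht)
    have h1 := (((hdy t ht).log hne).const_mul (2 * p ^ 2)).add
      ((hdy t ht).pow 2)
    have h2 := h1.add ((hasDerivWithinAt_id t _).const_mul 4)
    refine h2.congr_deriv ?_
    field_simp
    ring
  set g : ℝ → ℝ := fun t => x t + p * Real.log (y t) with hg
  have hdg : ∀ t ∈ Set.Icc (0:ℝ) T, HasDerivWithinAt g 0 (Set.Icc 0 T) t := by
    intro t ht
    have hne : y t ≠ 0 := ne_of_gt (hy t ht)
    have h1 := (hdx t ht).add (((hdy t ht).log hne).const_mul p)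
    refine h1.congr_deriv ?_
    field_simp
    ring
  have hconst : ∀ (F : ℝ → ℝ), (∀ t ∈ Set.Icc (0:ℝ) T, HasDerivWithinAt F 0 (Set.Icc 0 T) t) →
      F T = F 0 := by
    intro F hF
    refine constant_of_derivWithin_zero (fun t ht => (hF t ht).differentiableWithinAt)
      (fun t ht => ?_) T hTmem
    exact (hF t (Set.mem_Icc_of_Ico ht)).derivWithin (hud t (Set.mem_Icc_of_Ico ht))
  have hfc : f T = f 0 := hconst f hdf
  have hgc : g T = g 0 := hconst g hdg
  simp only [hf, hg, hy0, hx0, Real.log_one] at hfc hgc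
  constructor
  · linarith
  · linarith
end

section
/- Let 0 ≤ t₁ < t₂ and suppose x, y, Ψ₁, Ψ₂ : [t₁, t₂] → ℝ are differentiable with y(t) > 0 and √(Ψ₁(t)² + Ψ₂(t)²) − Ψ₂(t) > 0 for all t. Define λ(t) = x(t) − y(t)·Ψ₁(t)/(√(Ψ₁(t)² + Ψ₂(t)²) − Ψ₂(t)). Assume that on [t₁, t₂]: x' = 2(x−λ)/((x−λ)² + y²), y' = −2y/((x−λ)² + y²), Ψ₁' = (2/((x−λ)² + y²)²)·(((x−λ)² − y²)Ψ₁ − 2(x−λ)y·Ψ₂), and Ψ₂' = (2/((x−λ)² + y²)²)·(2(x−λ)y·Ψ₁ + ((x−λ)² − y²)Ψ₂). Then there exists a real constant p such that for all t ∈ [t₁, t₂]: (a) y(t)·Ψ₁(t)/(√(Ψ₁(t)² + Ψ₂(t)²) − Ψ₂(t)) = p; (b) λ(t) = x(t) − p; (c) y'(t) = −2·y(t)/(p² + y(t)²) and x'(t) = 2p/(p² + y(t)²). -/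
theorem stmt_2 (t₁ t₂ : ℝ) (ht₁ : 0 ≤ t₁) (ht : t₁ < t₂)
    (x y Ψ₁ Ψ₂ : ℝ → ℝ)
    (hy : ∀ t ∈ Set.Icc t₁ t₂, 0 < y t)
    (hΨ : ∀ t ∈ Set.Icc t₁ t₂, 0 < Real.sqrt ((Ψ₁ t) ^ 2 + (Ψ₂ t) ^ 2) - Ψ₂ t)
    (lam : ℝ → ℝ)
    (hlam : ∀ t, lam t = x t - y t * Ψ₁ t / (Real.sqrt ((Ψ₁ t) ^ 2 + (Ψ₂ t) ^ 2) - Ψ₂ t))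
    (hdx : ∀ t ∈ Set.Icc t₁ t₂,
      HasDerivWithinAt x (2 * (x t - lam t) / ((x t - lam t) ^ 2 + (y t) ^ 2)) (Set.Icc t₁ t₂) t)
    (hdy : ∀ t ∈ Set.Icc t₁ t₂,
      HasDerivWithinAt y (-2 * y t / ((x t - lam t) ^ 2 + (y t) ^ 2)) (Set.Icc t₁ t₂) t)
    (hdΨ₁ : ∀ t ∈ Set.Icc t₁ t₂,
      HasDerivWithinAt Ψ₁
        (2 / (((x t - lam t) ^ 2 + (y t) ^ 2) ^ 2) *
          (((x t - lam t) ^ 2 - (y t) ^ 2) * Ψ₁ t - 2 * (x t - lam t) * y t * Ψ₂ t))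
        (Set.Icc t₁ t₂) t)
    (hdΨ₂ : ∀ t ∈ Set.Icc t₁ t₂,
      HasDerivWithinAt Ψ₂
        (2 / (((x t - lam t) ^ 2 + (y t) ^ 2) ^ 2) *
          (2 * (x t - lam t) * y t * Ψ₁ t + ((x t - lam t) ^ 2 - (y t) ^ 2) * Ψ₂ t))
        (Set.Icc t₁ t₂) t) :
    ∃ p : ℝ, ∀ t ∈ Set.Icc t₁ t₂,
      y t * Ψ₁ t / (Real.sqrt ((Ψ₁ t) ^ 2 + (Ψ₂ t) ^ 2) - Ψ₂ t) = p ∧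
      lam t = x t - p ∧
      HasDerivWithinAt y (-2 * y t / (p ^ 2 + (y t) ^ 2)) (Set.Icc t₁ t₂) t ∧
      HasDerivWithinAt x (2 * p / (p ^ 2 + (y t) ^ 2)) (Set.Icc t₁ t₂) t := by
  set g : ℝ → ℝ := fun t => y t * Ψ₁ t / (Real.sqrt ((Ψ₁ t) ^ 2 + (Ψ₂ t) ^ 2) - Ψ₂ t) with hg_def
  have key : ∀ t ∈ Set.Icc t₁ t₂, HasDerivWithinAt g 0 (Set.Icc t₁ t₂) t := by
    intro t ht'
    have hyt := hy t ht'
    have hΨt := hΨ t ht'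
    have hq : 0 < (Ψ₁ t) ^ 2 + (Ψ₂ t) ^ 2 := by
      by_contra hc
      push_neg at hc
      have hq0 : (Ψ₁ t) ^ 2 + (Ψ₂ t) ^ 2 = 0 := le_antisymm hc (by positivity)
      have h2 : Ψ₂ t = 0 := by nlinarith [sq_nonneg (Ψ₁ t)]
      rw [hq0, h2, Real.sqrt_zero, sub_zero] at hΨt
      exact lt_irrefl 0 hΨt
    have hr0 : 0 < Real.sqrt ((Ψ₁ t) ^ 2 + (Ψ₂ t) ^ 2) := Real.sqrt_pos.2 hq
    have hr2 : (Real.sqrt ((Ψ₁ t) ^ 2 + (Ψ₂ t) ^ 2)) ^ 2 = (Ψ₁ t) ^ 2 + (Ψ₂ t) ^ 2 :=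
      Real.sq_sqrt hq.le
    have hD : (0:ℝ) < (x t - lam t) ^ 2 + (y t) ^ 2 := by positivity
    -- derivative of Ψ₁² + Ψ₂²
    have h1 : HasDerivWithinAt (fun t => (Ψ₁ t) ^ 2 + (Ψ₂ t) ^ 2)
        (2 * Ψ₁ t ^ 1 * (2 / (((x t - lam t) ^ 2 + (y t) ^ 2) ^ 2) *
          (((x t - lam t) ^ 2 - (y t) ^ 2) * Ψ₁ t - 2 * (x t - lam t) * y t * Ψ₂ t)) +
         2 * Ψ₂ t ^ 1 * (2 / (((x t - lam t) ^ 2 + (y t) ^ 2) ^ 2) *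
          (2 * (x t - lam t) * y t * Ψ₁ t + ((x t - lam t) ^ 2 - (y t) ^ 2) * Ψ₂ t)))
        (Set.Icc t₁ t₂) t := by
      exact (((hdΨ₁ t ht').fun_pow 2).add ((hdΨ₂ t ht').fun_pow 2)).congr_deriv (by norm_num)
    have h2 : HasDerivWithinAt (fun t => Real.sqrt ((Ψ₁ t) ^ 2 + (Ψ₂ t) ^ 2))
        ((1 / (2 * Real.sqrt ((Ψ₁ t) ^ 2 + (Ψ₂ t) ^ 2))) *
         (2 * Ψ₁ t ^ 1 * (2 / (((x t - lam t) ^ 2 + (y t) ^ 2) ^ 2) *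
          (((x t - lam t) ^ 2 - (y t) ^ 2) * Ψ₁ t - 2 * (x t - lam t) * y t * Ψ₂ t)) +
         2 * Ψ₂ t ^ 1 * (2 / (((x t - lam t) ^ 2 + (y t) ^ 2) ^ 2) *
          (2 * (x t - lam t) * y t * Ψ₁ t + ((x t - lam t) ^ 2 - (y t) ^ 2) * Ψ₂ t))))
        (Set.Icc t₁ t₂) t :=
      (Real.hasDerivAt_sqrt hq.ne').comp_hasDerivWithinAt t h1
    have h3 := h2.sub (hdΨ₂ t ht')
    have h4 := ((hdy t ht').mul (hdΨ₁ t ht'))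
    have h5 := h4.fun_div h3 hΨt.ne'
    convert (show HasDerivWithinAt g _ (Set.Icc t₁ t₂) t from h5) using 1
    symm
    rw [div_eq_zero_iff]
    left
    -- now substitute lam and sqrt
    obtain ⟨s, hs, hΨ₂eq, hreq⟩ : ∃ s : ℝ, 0 < s ∧ Ψ₂ t = ((Ψ₁ t)^2 - s^2)/(2*s) ∧
        Real.sqrt ((Ψ₁ t) ^ 2 + (Ψ₂ t) ^ 2) = ((Ψ₁ t)^2 + s^2)/(2*s) := by
      refine ⟨Real.sqrt ((Ψ₁ t) ^ 2 + (Ψ₂ t) ^ 2) - Ψ₂ t, hΨt, ?_, ?_⟩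
      · field_simp
        nlinarith [hr2]
      · field_simp
        nlinarith [hr2]
    have hu : x t - lam t = y t * Ψ₁ t / s := by
      rw [hlam t, hreq]
      have : ((Ψ₁ t)^2 + s^2)/(2*s) - Ψ₂ t = s := by rw [hΨ₂eq]; field_simp; ring
      rw [this]
      ring
    simp only [Pi.mul_apply, Pi.sub_apply]
    rw [hreq, hu, hΨ₂eq]
    have hy0 : y t ≠ 0 := hyt.ne'
    have hs0 : s ≠ 0 := hs.ne'
    have hDs : (y t * Ψ₁ t / s) ^ 2 + y t ^ 2 ≠ 0 := by positivity
    field_simp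
    ring
  have hcont : ContinuousOn g (Set.Icc t₁ t₂) := fun t ht' => (key t ht').continuousWithinAt
  have hconst : ∀ t ∈ Set.Icc t₁ t₂, g t = g t₁ :=
    constant_of_has_deriv_right_zero hcont (fun s hs =>
      (key s (Set.Ico_subset_Icc_self hs)).mono_of_mem_nhdsWithin (Icc_mem_nhdsGE_of_mem hs))
  refine ⟨g t₁, fun t ht' => ?_⟩
  have ha : y t * Ψ₁ t / (Real.sqrt ((Ψ₁ t) ^ 2 + (Ψ₂ t) ^ 2) - Ψ₂ t) = g t₁ := hconst t ht'
  have hb : lam t = x t - g t₁ := by rw [hlam t, ha]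
  have hxl : x t - lam t = g t₁ := by rw [hb]; ring
  refine ⟨ha, hb, ?_, ?_⟩
  · have := hdy t ht'
    rwa [hxl] at this
  · have := hdx t ht'
    rwa [hxl] at this
end

section
/- Let x ∈ ℝ, y > 0, and (Ψ₁, Ψ₂) ∈ ℝ² with √(Ψ₁² + Ψ₂²) − Ψ₂ > 0. Define H(λ) = (2(x−λ)Ψ₁ − 2y·Ψ₂)/((x−λ)² + y²) for λ ∈ ℝ, and λ₀ = x − y·Ψ₁/(√(Ψ₁² + Ψ₂²) − Ψ₂). Then H(λ₀) = (√(Ψ₁² + Ψ₂²) − Ψ₂)/y, and H(λ) < H(λ₀) for every real λ ≠ λ₀; in particular λ₀ is the unique point of global maximum of H on ℝ. -/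
theorem stmt_3 (x y Ψ₁ Ψ₂ : ℝ) (hy : 0 < y)
    (hΨ : 0 < Real.sqrt (Ψ₁ ^ 2 + Ψ₂ ^ 2) - Ψ₂)
    (H : ℝ → ℝ)
    (hH : ∀ lam : ℝ, H lam = (2 * (x - lam) * Ψ₁ - 2 * y * Ψ₂) / ((x - lam) ^ 2 + y ^ 2))
    (lam₀ : ℝ)
    (hlam₀ : lam₀ = x - y * Ψ₁ / (Real.sqrt (Ψ₁ ^ 2 + Ψ₂ ^ 2) - Ψ₂)) :
    H lam₀ = (Real.sqrt (Ψ₁ ^ 2 + Ψ₂ ^ 2) - Ψ₂) / y ∧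
      ∀ lam : ℝ, lam ≠ lam₀ → H lam < H lam₀ := by
  set s := Real.sqrt (Ψ₁ ^ 2 + Ψ₂ ^ 2) with hs
  have hs2 : s ^ 2 = Ψ₁ ^ 2 + Ψ₂ ^ 2 := Real.sq_sqrt (by positivity)
  set m := s - Ψ₂ with hmdef
  have hm : 0 < m := hΨ
  have hfact : Ψ₁ ^ 2 = m ^ 2 + 2 * m * Ψ₂ := by rw [hmdef]; linear_combination -hs2
  have hy' : y ≠ 0 := ne_of_gt hy
  have hm' : m ≠ 0 := ne_of_gt hm
  have hx0 : x - lam₀ = y * Ψ₁ / m := by rw [hlam₀]; ring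
  have hmain : H lam₀ = m / y := by
    rw [hH, hx0]
    have hden : (y * Ψ₁ / m) ^ 2 + y ^ 2 ≠ 0 := by positivity
    field_simp
    linear_combination hfact
  refine ⟨hmain, fun lam hne => ?_⟩
  rw [hH, hmain]
  have hden : 0 < (x - lam) ^ 2 + y ^ 2 := by positivity
  rw [div_lt_div_iff₀ hden hy]
  have hkey : m * (x - lam) - y * Ψ₁ ≠ 0 := by
    intro h
    apply hne
    rw [hlam₀]
    field_simp at h ⊢
    linarith
  have hsq : 0 < (m * (x - lam) - y * Ψ₁) ^ 2 := by positivity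
  nlinarith [hsq, hfact, mul_pos hy hm, sq_nonneg y, hm.le]
end

section
/- Let 0 < 1 − 4T < e^{−4} (equivalently (1−e^{−4})/4 < T < 1/4) and define f₂(Y) = (1 − 4T − Y²)·(1 + log Y)²/(2·log Y). Then f₂ is strictly increasing on the interval [√(1−4T), e^{−2}]. -/
theorem stmt_6 (T : ℝ) (h0 : 0 < 1 - 4 * T) (h1 : 1 - 4 * T < Real.exp (-4)) (f₂ : ℝ → ℝ)
    (hf₂ : ∀ Y : ℝ, f₂ Y = (1 - 4 * T - Y ^ 2) * (1 + Real.log Y) ^ 2 / (2 * Real.log Y)) :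
    StrictMonoOn f₂ (Set.Icc (Real.sqrt (1 - 4 * T)) (Real.exp (-2))) := by
  set a := 1 - 4 * T with ha
  have hfun : f₂ = fun Y => (a - Y ^ 2) * (1 + Real.log Y) ^ 2 / (2 * Real.log Y) := by
    funext Y; rw [hf₂]
  have hsq_pos : 0 < Real.sqrt a := Real.sqrt_pos.mpr h0
  have hmem : ∀ x ∈ Set.Icc (Real.sqrt a) (Real.exp (-2)), 0 < x ∧ Real.log x < 0 := by
    intro x hx
    have hx0 : 0 < x := lt_of_lt_of_le hsq_pos hx.1
    refine ⟨hx0, ?_⟩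
    have hle : Real.log x ≤ Real.log (Real.exp (-2)) :=
      (Real.log_le_log_iff hx0 (Real.exp_pos _)).mpr hx.2
    rw [Real.log_exp] at hle
    linarith
  have hderiv : ∀ x : ℝ, 0 < x → Real.log x < 0 →
      HasDerivAt f₂ (((-(2*x) * (1 + Real.log x) ^ 2 +
        (a - x ^ 2) * (2 * (1 + Real.log x) * x⁻¹)) * (2 * Real.log x) -
        (a - x ^ 2) * (1 + Real.log x) ^ 2 * (2 * x⁻¹)) / (2 * Real.log x) ^ 2) x := by
    intro x hx0 hL
    have hx : x ≠ 0 := ne_of_gt hx0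
    have hLne : 2 * Real.log x ≠ 0 := by nlinarith
    have h1 : HasDerivAt (fun Y : ℝ => a - Y ^ 2) (-(2*x)) x := by
      simpa using ((hasDerivAt_pow 2 x).const_sub a)
    have h2 : HasDerivAt (fun Y : ℝ => (1 + Real.log Y) ^ 2)
        (2 * (1 + Real.log x) * x⁻¹) x := by
      have := ((Real.hasDerivAt_log hx).const_add 1).fun_pow 2
      simpa [mul_comm, mul_assoc, mul_left_comm] using this
    have h3 := h1.fun_mul h2
    have h4 : HasDerivAt (fun Y : ℝ => 2 * Real.log Y) (2 * x⁻¹) x :=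
      (Real.hasDerivAt_log hx).const_mul 2
    have h5 := h3.fun_div h4 hLne
    rw [hfun]
    convert h5 using 1
  apply strictMonoOn_of_deriv_pos (convex_Icc _ _)
  · intro x hx
    obtain ⟨hx0, hL⟩ := hmem x hx
    exact ((hderiv x hx0 hL).continuousAt).continuousWithinAt
  · intro x hx
    rw [interior_Icc] at hx
    have hx0 : 0 < x := lt_of_lt_of_le hsq_pos (le_of_lt hx.1)
    have hL2 : Real.log x < -2 := by
      have := Real.log_lt_log hx0 hx.2
      rwa [Real.log_exp] at this
    have hL : Real.log x < 0 := by linarith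
    rw [(hderiv x hx0 hL).deriv]
    set L := Real.log x with hLdef
    have hLne : L ≠ 0 := by linarith
    have hden : 0 < (2 * L) ^ 2 := by positivity
    apply div_pos ?_ hden
    have hinv : x⁻¹ = 1 / x := by ring
    rw [hinv]
    have hxne : x ≠ 0 := ne_of_gt hx0
    have key : 0 < ((-(2*x) * (1 + L) ^ 2 + (a - x ^ 2) * (2 * (1 + L) * (1/x))) * (2 * L) -
        (a - x ^ 2) * (1 + L) ^ 2 * (2 * (1/x))) * x := by
      have hxx : (1/x) * x = 1 := by field_simp
      have expand : ((-(2*x) * (1 + L) ^ 2 + (a - x ^ 2) * (2 * (1 + L) * (1/x))) * (2 * L) -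
          (a - x ^ 2) * (1 + L) ^ 2 * (2 * (1/x))) * x
          = -4*x^2*L*(1+L)^2 + 4*(a - x^2)*(1+L)*L - 2*(a-x^2)*(1+L)^2 := by
        field_simp; ring
      rw [expand]
      nlinarith [sq_nonneg x, sq_nonneg (1+L), mul_pos hx0 hx0, sq_nonneg (x*(1+L)),
        mul_pos (mul_pos hx0 hx0) (mul_pos (neg_pos.mpr (show (1:ℝ)+L < 0 by linarith)) (neg_pos.mpr (show L+2 < 0 by linarith))),
        mul_pos h0 (mul_pos (neg_pos.mpr (show (1:ℝ)+L < 0 by linarith)) (neg_pos.mpr (show L-1 < 0 by linarith)))]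
    nlinarith [key, hx0]
end

section
/- Let 0 < 1 − 4T < e^{−4}. Then for every Y ∈ [√(1−4T), e^{−2}]: 2·log Y·(log Y + 1)/(log Y − 1) < (1 − 4T)/Y² − 1. Consequently, the map Y ↦ 2·log Y·(log Y + 1)/(log Y − 1) is strictly increasing on [√(1−4T), e^{−2}] with value −4/3 at Y = e^{−2}, while Y ↦ (1−4T)/Y² − 1 is strictly decreasing on [√(1−4T), e^{−2}] with value (1−4T)e⁴ − 1 > −1 at Y = e^{−2}. -/
theorem stmt_7 (T : ℝ) (h0 : 0 < 1 - 4 * T) (h1 : 1 - 4 * T < Real.exp (-4)) :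
    (∀ Y ∈ Set.Icc (Real.sqrt (1 - 4 * T)) (Real.exp (-2)),
      2 * Real.log Y * (Real.log Y + 1) / (Real.log Y - 1) < (1 - 4 * T) / Y ^ 2 - 1) ∧
    StrictMonoOn (fun Y => 2 * Real.log Y * (Real.log Y + 1) / (Real.log Y - 1))
      (Set.Icc (Real.sqrt (1 - 4 * T)) (Real.exp (-2))) ∧
    2 * Real.log (Real.exp (-2)) * (Real.log (Real.exp (-2)) + 1) /
        (Real.log (Real.exp (-2)) - 1) = -4 / 3 ∧
    StrictAntiOn (fun Y => (1 - 4 * T) / Y ^ 2 - 1)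
      (Set.Icc (Real.sqrt (1 - 4 * T)) (Real.exp (-2))) ∧
    (1 - 4 * T) / (Real.exp (-2)) ^ 2 - 1 = (1 - 4 * T) * Real.exp 4 - 1 ∧
    (-1 : ℝ) < (1 - 4 * T) * Real.exp 4 - 1 := by
  have hs : 0 < Real.sqrt (1 - 4 * T) := Real.sqrt_pos.mpr h0
  have hlogL : ∀ Y : ℝ, Real.sqrt (1 - 4 * T) ≤ Y → Y ≤ Real.exp (-2) →
      Real.log Y ≤ -2 := by
    intro Y hY1 hY2
    have h := Real.log_le_log (lt_of_lt_of_le hs hY1) hY2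
    rwa [Real.log_exp] at h
  refine ⟨?_, ?_, ?_, ?_, ?_, ?_⟩
  · rintro Y ⟨hY1, hY2⟩
    have hY0 : 0 < Y := lt_of_lt_of_le hs hY1
    set L := Real.log Y with hLdef
    have hL : L ≤ -2 := hlogL Y hY1 hY2
    have hden : L - 1 < 0 := by linarith
    have hleft : 2 * L * (L + 1) / (L - 1) ≤ -4 / 3 := by
      rw [div_le_iff_of_neg hden]
      nlinarith [mul_nonneg (show (0:ℝ) ≤ -(3 * L - 1) by linarith)
        (show (0:ℝ) ≤ -(L + 2) by linarith)]
    have hright : (-1 : ℝ) < (1 - 4 * T) / Y ^ 2 - 1 := by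
      have : 0 < (1 - 4 * T) / Y ^ 2 := div_pos h0 (by positivity)
      linarith
    linarith
  · rintro Y₁ ⟨hY11, hY12⟩ Y₂ ⟨hY21, hY22⟩ h12
    have hY10 : 0 < Y₁ := lt_of_lt_of_le hs hY11
    have hY20 : 0 < Y₂ := lt_of_lt_of_le hs hY21
    have hL12 : Real.log Y₁ < Real.log Y₂ := Real.log_lt_log hY10 h12
    set L₁ := Real.log Y₁
    set L₂ := Real.log Y₂
    have hL2 : L₂ ≤ -2 := hlogL Y₂ hY21 hY22
    have hL1 : L₁ < -2 := lt_of_lt_of_le hL12 hL2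
    have hd1 : (0:ℝ) < 1 - L₁ := by linarith
    have hd2 : (0:ℝ) < 1 - L₂ := by linarith
    simp only
    have e1 : 2 * L₁ * (L₁ + 1) / (L₁ - 1) = -(2 * L₁ * (L₁ + 1)) / (1 - L₁) := by
      rw [div_eq_div_iff (show L₁ - 1 ≠ 0 from ne_of_lt (by linarith)) (ne_of_gt hd1)]; ring
    have e2 : 2 * L₂ * (L₂ + 1) / (L₂ - 1) = -(2 * L₂ * (L₂ + 1)) / (1 - L₂) := by
      rw [div_eq_div_iff (show L₂ - 1 ≠ 0 from ne_of_lt (by linarith)) (ne_of_gt hd2)]; ring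
    rw [e1, e2, div_lt_div_iff₀ hd1 hd2]
    nlinarith [mul_pos (sub_pos.mpr hL12)
      (show (0:ℝ) < L₁ * L₂ - L₁ - L₂ - 1 by nlinarith)]
  · rw [Real.log_exp]; norm_num
  · rintro Y₁ ⟨hY11, hY12⟩ Y₂ ⟨hY21, hY22⟩ h12
    have hY10 : 0 < Y₁ := lt_of_lt_of_le hs hY11
    have hY20 : 0 < Y₂ := lt_of_lt_of_le hs hY21
    simp only
    have : (1 - 4 * T) / Y₂ ^ 2 < (1 - 4 * T) / Y₁ ^ 2 :=
      div_lt_div_of_pos_left h0 (by positivity)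
        (by nlinarith)
    linarith
  · have he : Real.exp (-2) ^ 2 = Real.exp (-4) := by
      rw [sq, ← Real.exp_add]; norm_num
    rw [he, Real.exp_neg, div_eq_mul_inv, inv_inv]
  · nlinarith [Real.exp_pos (4:ℝ), mul_pos h0 (Real.exp_pos (4:ℝ))]
end

section
/- Let (1−e^{−4})/4 < T < 1/4 and let c > 0 satisfy c² ≤ T − (1−e^{−4})/4. Then the equation 2c²·log Y/(1 + log Y)² + Y² = 1 − 4T has a unique solution Y₀ in the interval (√(1−4T), e^{−2}]. -/
theorem stmt_9 (T c : ℝ) (hT1 : (1 - Real.exp (-4)) / 4 < T) (hT2 : T < 1 / 4)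
    (hc : 0 < c) (hc2 : c ^ 2 ≤ T - (1 - Real.exp (-4)) / 4) :
    ∃! Y₀ : ℝ, Y₀ ∈ Set.Ioc (Real.sqrt (1 - 4 * T)) (Real.exp (-2)) ∧
      2 * c ^ 2 * Real.log Y₀ / (1 + Real.log Y₀) ^ 2 + Y₀ ^ 2 = 1 - 4 * T := by
  set a : ℝ := 1 - 4 * T with ha_def
  set E : ℝ := Real.exp (-2) with hE_def
  have ha0 : 0 < a := by simp only [ha_def]; linarith
  have hE4 : E ^ 2 = Real.exp (-4) := by
    rw [hE_def, sq, ← Real.exp_add]; norm_num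
  have haE : a < E ^ 2 := by rw [hE4]; simp only [ha_def]; linarith
  set s : ℝ := Real.sqrt a with hs_def
  have hs0 : 0 < s := Real.sqrt_pos.mpr ha0
  have hs2 : s ^ 2 = a := Real.sq_sqrt ha0.le
  have hE0 : 0 < E := Real.exp_pos _
  have hsE : s < E := by
    nlinarith [hs2, haE, hs0, hE0]
  set f : ℝ → ℝ := fun Y => (a - Y ^ 2) * (1 + Real.log Y) ^ 2 / (2 * Real.log Y)
    with hf_def
  -- basic facts on the interval
  have hlogle : ∀ x : ℝ, 0 < x → x ≤ E → Real.log x ≤ -2 := by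
    intro x hx hxE
    rw [Real.log_le_iff_le_exp hx]; exact hxE
  -- continuity
  have hne : ∀ x ∈ Set.Icc s E, x ≠ 0 := fun x hx => (hs0.trans_le hx.1).ne'
  have hlogc : ContinuousOn Real.log (Set.Icc s E) :=
    Real.continuousOn_log.mono (fun x hx => hne x hx)
  have hcont : ContinuousOn f (Set.Icc s E) := by
    apply ContinuousOn.div
    · exact (continuousOn_const.sub ((continuous_pow 2).continuousOn)).mul
        ((continuousOn_const.add hlogc).pow 2)
    · exact continuousOn_const.mul hlogc
    · intro x hx
      have hx0 : 0 < x := hs0.trans_le hx.1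
      have := hlogle x hx0 hx.2
      intro h
      have : Real.log x = 0 := by
        rcases mul_eq_zero.mp h with h' | h'
        · norm_num at h'
        · exact h'
      linarith
  -- strict monotonicity
  have hmono : StrictMonoOn f (Set.Icc s E) := by
    apply strictMonoOn_of_deriv_pos (convex_Icc s E) hcont
    intro x hx
    rw [interior_Icc] at hx
    have hx0 : 0 < x := hs0.trans hx.1
    have hxne : x ≠ 0 := hx0.ne'
    set u : ℝ := Real.log x with hu_def
    have hu : u ≤ -2 := hlogle x hx0 hx.2.le
    have hune : u ≠ 0 := by intro h; rw [h] at hu; norm_num at hu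
    have hD0 : (2 : ℝ) * u ≠ 0 := mul_ne_zero two_ne_zero hune
    have hL : HasDerivAt Real.log x⁻¹ x := Real.hasDerivAt_log hxne
    have h1 : HasDerivAt (fun y : ℝ => a - y ^ 2) (-(2 * x)) x := by
      simpa using (hasDerivAt_pow 2 x).const_sub a
    have h2 : HasDerivAt (fun y : ℝ => (1 + Real.log y) ^ 2)
        (2 * (1 + u) * x⁻¹) x := by
      simpa using (hL.const_add 1).fun_pow 2
    have hD : HasDerivAt (fun y : ℝ => 2 * Real.log y) (2 * x⁻¹) x :=
      hL.const_mul 2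
    have hf := (h1.mul h2).div hD hD0
    have hderiv : deriv f x =
        ((-(2 * x) * (1 + u) ^ 2 + (a - x ^ 2) * (2 * (1 + u) * x⁻¹)) * (2 * u)
          - (a - x ^ 2) * (1 + u) ^ 2 * (2 * x⁻¹)) / (2 * u) ^ 2 := hf.deriv
    rw [hderiv]
    apply div_pos
    · have hnum : (-(2 * x) * (1 + u) ^ 2 + (a - x ^ 2) * (2 * (1 + u) * x⁻¹)) * (2 * u)
          - (a - x ^ 2) * (1 + u) ^ 2 * (2 * x⁻¹)
          = x⁻¹ * (-4 * x ^ 2 * u * (1 + u) ^ 2 + 4 * u * (a - x ^ 2) * (1 + u)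
              - 2 * (a - x ^ 2) * (1 + u) ^ 2) := by
        field_simp
        ring
      rw [hnum]
      apply mul_pos (inv_pos.mpr hx0)
      have hB : 0 < 2 * u ^ 2 + 3 * u - 1 := by nlinarith [sq_nonneg (u + 2)]
      have hA : 0 < -(1 + u) := by linarith
      have hid : -4 * x ^ 2 * u * (1 + u) ^ 2 + 4 * u * (a - x ^ 2) * (1 + u)
          - 2 * (a - x ^ 2) * (1 + u) ^ 2
          = 2 * (x ^ 2 * (-(1 + u)) * (2 * u ^ 2 + 3 * u - 1))
            + 2 * (a * (-(1 + u)) * (1 - u)) := by ring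
      rw [hid]
      have t1 : 0 < x ^ 2 * (-(1 + u)) * (2 * u ^ 2 + 3 * u - 1) :=
        mul_pos (mul_pos (pow_pos hx0 2) hA) hB
      have t2 : 0 ≤ a * (-(1 + u)) * (1 - u) :=
        mul_nonneg (mul_nonneg ha0.le hA.le) (by linarith)
      linarith
    · positivity
  -- endpoint values
  have hfs : f s = 0 := by
    have h : f s = (a - s ^ 2) * (1 + Real.log s) ^ 2 / (2 * Real.log s) := rfl
    rw [h, hs2]
    simp
  have hfE : f E = (E ^ 2 - a) / 4 := by
    have h : f E = (a - E ^ 2) * (1 + Real.log E) ^ 2 / (2 * Real.log E) := rfl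
    rw [h, hE_def, Real.log_exp]
    ring
  have hc2' : c ^ 2 ≤ f E := by
    rw [hfE, hE4]; simp only [ha_def]; linarith
  -- existence via IVT
  obtain ⟨Y₀, hY₀mem, hfY₀⟩ := intermediate_value_Icc hsE.le hcont
    (Set.mem_Icc.mpr ⟨by rw [hfs]; positivity, hc2'⟩)
  have hY₀s : s < Y₀ := by
    rcases lt_or_eq_of_le hY₀mem.1 with h | h
    · exact h
    · exfalso
      have : (0:ℝ) < c ^ 2 := pow_pos hc 2
      rw [← hfY₀, ← h, hfs] at this
      exact lt_irrefl 0 this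
  -- the key equivalence
  have key : ∀ Y ∈ Set.Ioc s E,
      (2 * c ^ 2 * Real.log Y / (1 + Real.log Y) ^ 2 + Y ^ 2 = 1 - 4 * T ↔
        f Y = c ^ 2) := by
    rintro Y ⟨h1Y, h2Y⟩
    have hY : 0 < Y := hs0.trans h1Y
    have hu : Real.log Y ≤ -2 := hlogle Y hY h2Y
    have h1u : (1 + Real.log Y) ≠ 0 := by intro h; rw [show Real.log Y = -1 by linarith] at hu; norm_num at hu
    have h2u : Real.log Y ≠ 0 := by intro h; rw [h] at hu; norm_num at hu
    have hD0 : (2:ℝ) * Real.log Y ≠ 0 := mul_ne_zero two_ne_zero h2u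
    have hfY : f Y = (a - Y ^ 2) * (1 + Real.log Y) ^ 2 / (2 * Real.log Y) := rfl
    rw [hfY, div_eq_iff hD0, ha_def]
    constructor
    · intro h
      field_simp at h
      linear_combination -h
    · intro h
      field_simp
      linear_combination -h
  refine ⟨Y₀, ⟨⟨hY₀s, hY₀mem.2⟩, (key Y₀ ⟨hY₀s, hY₀mem.2⟩).mpr hfY₀⟩, ?_⟩
  rintro Y ⟨hYmem, hYeq⟩
  have hfY : f Y = c ^ 2 := (key Y hYmem).mp hYeq
  exact hmono.injOn (Set.Ioc_subset_Icc_self hYmem)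
    (Set.Ioc_subset_Icc_self ⟨hY₀s, hY₀mem.2⟩) (hfY.trans hfY₀.symm)
end

section
/- Let c > 0, p > c, T > 0 and 0 ≤ t₁ ≤ T. Suppose x, y : [0, T] → ℝ are continuous with y(t) > 0 for all t, x(0) = 0, y(0) = 1, and: on [0, t₁], x' = 2(x+c)/((x+c)² + y²) and y' = −2y/((x+c)² + y²); on [t₁, T], y' = −2y/(p² + y²) and x' = 2p/(p² + y²); and x(t₁) = p − c. Then y(t₁) = c/p, 4t₁ = p² − c²/p² − c² + 1, and the terminal point X = x(T), Y = y(T) satisfies 2p²·log(Y·p/c) + Y² − p² = 1 − 4T − c² and X = −c + p·(1 − log(Y·p/c)). -/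
lemma my_const_of_deriv_zero {f : ℝ → ℝ} {a b : ℝ}
    (hcont : ContinuousOn f (Set.Icc a b))
    (hd : ∀ t ∈ Set.Icc a b, HasDerivWithinAt f 0 (Set.Icc a b) t) :
    ∀ t ∈ Set.Icc a b, f t = f a := by
  apply constant_of_has_deriv_right_zero hcont
  intro s hs
  exact (hd s ⟨hs.1, hs.2.le⟩).mono_of_mem_nhdsWithin (Icc_mem_nhdsGE_of_mem hs)

theorem stmt_13 (c p T t₁ : ℝ) (hc : 0 < c) (hp : c < p) (hT : 0 < T)
    (ht₁0 : 0 ≤ t₁) (ht₁T : t₁ ≤ T) (x y : ℝ → ℝ)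
    (hxc : ContinuousOn x (Set.Icc 0 T)) (hyc : ContinuousOn y (Set.Icc 0 T))
    (hy : ∀ t ∈ Set.Icc (0:ℝ) T, 0 < y t)
    (hx0 : x 0 = 0) (hy0 : y 0 = 1)
    (hdx1 : ∀ t ∈ Set.Icc (0:ℝ) t₁,
      HasDerivWithinAt x (2 * (x t + c) / ((x t + c) ^ 2 + (y t) ^ 2)) (Set.Icc 0 t₁) t)
    (hdy1 : ∀ t ∈ Set.Icc (0:ℝ) t₁,
      HasDerivWithinAt y (-2 * y t / ((x t + c) ^ 2 + (y t) ^ 2)) (Set.Icc 0 t₁) t)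
    (hdy2 : ∀ t ∈ Set.Icc t₁ T,
      HasDerivWithinAt y (-2 * y t / (p ^ 2 + (y t) ^ 2)) (Set.Icc t₁ T) t)
    (hdx2 : ∀ t ∈ Set.Icc t₁ T,
      HasDerivWithinAt x (2 * p / (p ^ 2 + (y t) ^ 2)) (Set.Icc t₁ T) t)
    (hxt₁ : x t₁ = p - c) :
    y t₁ = c / p ∧ 4 * t₁ = p ^ 2 - c ^ 2 / p ^ 2 - c ^ 2 + 1 ∧
    2 * p ^ 2 * Real.log (y T * p / c) + (y T) ^ 2 - p ^ 2 = 1 - 4 * T - c ^ 2 ∧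
    x T = -c + p * (1 - Real.log (y T * p / c)) := by
  have hp0 : 0 < p := hc.trans hp
  have hsub1 : Set.Icc (0:ℝ) t₁ ⊆ Set.Icc 0 T := Set.Icc_subset_Icc le_rfl ht₁T
  have hsub2 : Set.Icc t₁ T ⊆ Set.Icc 0 T := Set.Icc_subset_Icc ht₁0 le_rfl
  have h0mem : (0:ℝ) ∈ Set.Icc (0:ℝ) t₁ := ⟨le_rfl, ht₁0⟩
  have ht₁mem : t₁ ∈ Set.Icc (0:ℝ) t₁ := ⟨ht₁0, le_rfl⟩
  have ht₁mem2 : t₁ ∈ Set.Icc t₁ T := ⟨le_rfl, ht₁T⟩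
  have hTmem : T ∈ Set.Icc t₁ T := ⟨ht₁T, le_rfl⟩
  have hyT : 0 < y T := hy T ⟨hT.le, le_rfl⟩
  -- Phase 1 conserved quantity (x+c)*y
  have hA : ∀ t ∈ Set.Icc (0:ℝ) t₁, (x t + c) * y t = c := by
    have := my_const_of_deriv_zero (f := fun t => (x t + c) * y t) (a := 0) (b := t₁)
      ((((hxc.mono hsub1).add continuousOn_const)).mul (hyc.mono hsub1))
      (fun t ht => by
        have hyt : 0 < y t := hy t (hsub1 ht)
        have hD : (x t + c) ^ 2 + (y t) ^ 2 ≠ 0 := by positivity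
        have h := ((hdx1 t ht).add_const c).mul (hdy1 t ht)
        refine h.congr_deriv ?_
        field_simp
        ring)
    intro t ht
    have h := this t ht
    simp only [hx0, hy0, zero_add, mul_one] at h
    exact h
  have hyt₁ : y t₁ = c / p := by
    have := hA t₁ ht₁mem
    rw [hxt₁] at this
    field_simp at this ⊢
    linarith
  -- Phase 1 conserved quantity (x+c)^2 - y^2 - 4t
  have hB : (x t₁ + c) ^ 2 - (y t₁) ^ 2 - 4 * t₁ = c ^ 2 - 1 := by
    have := my_const_of_deriv_zero (f := fun t => (x t + c) ^ 2 - (y t) ^ 2 - 4 * t)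
      (a := 0) (b := t₁)
      (((((hxc.mono hsub1).add continuousOn_const).pow 2).sub ((hyc.mono hsub1).pow 2)).sub
        (continuousOn_const.mul continuousOn_id))
      (fun t ht => by
        have hyt : 0 < y t := hy t (hsub1 ht)
        have hD : (x t + c) ^ 2 + (y t) ^ 2 ≠ 0 := by positivity
        have h := ((((hdx1 t ht).add_const c).pow 2).sub ((hdy1 t ht).pow 2)).sub
          ((hasDerivWithinAt_id t (Set.Icc 0 t₁)).const_mul 4)
        refine h.congr_deriv ?_
        field_simp
        ring)
    have h2 := this t₁ ht₁mem
    simp only [hx0, hy0] at h2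
    rw [h2]; ring
  have ht₁eq : 4 * t₁ = p ^ 2 - c ^ 2 / p ^ 2 - c ^ 2 + 1 := by
    rw [hxt₁, hyt₁] at hB
    have : (p - c + c) ^ 2 = p ^ 2 := by ring
    rw [this, div_pow] at hB
    linarith
  -- Phase 2 conserved quantities
  have hC : ∀ t ∈ Set.Icc t₁ T,
      2 * p ^ 2 * Real.log (y t) + (y t) ^ 2 + 4 * t
        = 2 * p ^ 2 * Real.log (y t₁) + (y t₁) ^ 2 + 4 * t₁ := by
    have := my_const_of_deriv_zero
      (f := fun t => 2 * p ^ 2 * Real.log (y t) + (y t) ^ 2 + 4 * t) (a := t₁) (b := T)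
      ((continuousOn_const.mul ((hyc.mono hsub2).log
        (fun t ht => (hy t (hsub2 ht)).ne'))).add ((hyc.mono hsub2).pow 2) |>.add
        (continuousOn_const.mul continuousOn_id))
      (fun t ht => by
        have hyt : 0 < y t := hy t (hsub2 ht)
        have hD : p ^ 2 + (y t) ^ 2 ≠ 0 := by positivity
        have h := ((((hdy2 t ht).log hyt.ne').const_mul (2 * p ^ 2)).add
          ((hdy2 t ht).pow 2)).add ((hasDerivWithinAt_id t (Set.Icc t₁ T)).const_mul 4)
        refine h.congr_deriv ?_
        field_simp
        ring)
    intro t ht; exact this t ht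
  have hD2 : ∀ t ∈ Set.Icc t₁ T,
      x t + p * Real.log (y t) = x t₁ + p * Real.log (y t₁) := by
    have := my_const_of_deriv_zero
      (f := fun t => x t + p * Real.log (y t)) (a := t₁) (b := T)
      ((hxc.mono hsub2).add (continuousOn_const.mul ((hyc.mono hsub2).log
        (fun t ht => (hy t (hsub2 ht)).ne'))))
      (fun t ht => by
        have hyt : 0 < y t := hy t (hsub2 ht)
        have hD : p ^ 2 + (y t) ^ 2 ≠ 0 := by positivity
        have h := (hdx2 t ht).add (((hdy2 t ht).log hyt.ne').const_mul p)
        refine h.congr_deriv ?_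
        field_simp
        ring)
    intro t ht; exact this t ht
  -- log identity
  have hlog : Real.log (y T * p / c) = Real.log (y T) - Real.log (c / p) := by
    rw [Real.log_div (by positivity) hc.ne', Real.log_mul hyT.ne' hp0.ne',
      Real.log_div hc.ne' hp0.ne']
    ring
  have hCT := hC T hTmem
  have hDT := hD2 T hTmem
  rw [hyt₁] at hCT hDT
  rw [hxt₁] at hDT
  refine ⟨hyt₁, ht₁eq, ?_, ?_⟩
  · have hcp : (c / p) ^ 2 = c ^ 2 / p ^ 2 := by rw [div_pow]
    rw [hlog]
    nlinarith [hCT, ht₁eq, hcp]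
  · rw [hlog]
    linarith [hDT]
end

section
/- Let c > 0, p > c, T > 0 and 0 ≤ t₁ ≤ t₂ ≤ T. Suppose x, y : [0, T] → ℝ are continuous with y(t) > 0 for all t, x(0) = 0, y(0) = 1, and: on [0, t₁], x' = 2(x+c)/((x+c)² + y²) and y' = −2y/((x+c)² + y²); on [t₁, t₂], y' = −2y/(p² + y²) and x' = 2p/(p² + y²); on [t₂, T], x' = 2(x−c)/((x−c)² + y²) and y' = −2y/((x−c)² + y²); and x(t₁) = p − c, x(t₂) = c + p. Then the terminal point X = x(T), Y = y(T) satisfies 4cp + (X−c)² − Y² − 4T = c² − 1 and −p·log((X−c)·Y/c) = 2c, and moreover 4t₂ = 1 − c² + 4pc + p² − (X−c)²·Y²/p². -/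
open Set

lemma const_of_deriv_zero' {f : ℝ → ℝ} {a b : ℝ} (hab : a ≤ b)
    (hcont : ContinuousOn f (Icc a b))
    (hderiv : ∀ t ∈ Icc a b, HasDerivWithinAt f 0 (Icc a b) t) :
    f b = f a := by
  refine constant_of_has_deriv_right_zero hcont (fun t ht => ?_) b (right_mem_Icc.2 hab)
  exact (hderiv t (Ico_subset_Icc_self ht)).mono_of_mem_nhdsWithin (Icc_mem_nhdsGE_of_mem ht)

lemma phaseA (x y : ℝ → ℝ) (a b q : ℝ) (hab : a ≤ b)
    (hxc : ContinuousOn x (Icc a b)) (hyc : ContinuousOn y (Icc a b))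
    (hy : ∀ t ∈ Icc a b, 0 < y t)
    (hdx : ∀ t ∈ Icc a b, HasDerivWithinAt x (2*(x t + q)/((x t + q)^2 + (y t)^2)) (Icc a b) t)
    (hdy : ∀ t ∈ Icc a b, HasDerivWithinAt y (-2*y t/((x t + q)^2 + (y t)^2)) (Icc a b) t) :
    ((x b + q)^2 - (y b)^2 - 4*b = (x a + q)^2 - (y a)^2 - 4*a) ∧
    ((x b + q)*(y b) = (x a + q)*(y a)) := by
  have hD : ∀ t ∈ Icc a b, ((x t + q)^2 + (y t)^2) ≠ 0 := fun t ht =>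
    (add_pos_of_nonneg_of_pos (sq_nonneg _) (pow_pos (hy t ht) 2)).ne'
  constructor
  · have := const_of_deriv_zero' (f := fun s => (x s + q)^2 - (y s)^2 - 4*s) hab
      (by fun_prop) (fun t ht => ?_)
    · exact this
    · have H := ((((hdx t ht).add_const q).pow 2).sub ((hdy t ht).pow 2)).sub
        ((hasDerivWithinAt_id t _).const_mul 4)
      refine H.congr_deriv ?_
      have := hD t ht
      field_simp
      ring
  · have := const_of_deriv_zero' (f := fun s => (x s + q)*(y s)) hab
      (by fun_prop) (fun t ht => ?_)
    · exact this
    · have H := ((hdx t ht).add_const q).mul (hdy t ht)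
      refine H.congr_deriv ?_
      have := hD t ht
      field_simp
      ring

lemma phaseB (x y : ℝ → ℝ) (a b p : ℝ) (hab : a ≤ b)
    (hxc : ContinuousOn x (Icc a b)) (hyc : ContinuousOn y (Icc a b))
    (hy : ∀ t ∈ Icc a b, 0 < y t)
    (hdx : ∀ t ∈ Icc a b, HasDerivWithinAt x (2*p/(p^2 + (y t)^2)) (Icc a b) t)
    (hdy : ∀ t ∈ Icc a b, HasDerivWithinAt y (-2*y t/(p^2 + (y t)^2)) (Icc a b) t) :
    (x b + p*Real.log (y b) = x a + p*Real.log (y a)) ∧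
    (p^2*Real.log (y b) + (y b)^2/2 + 2*b = p^2*Real.log (y a) + (y a)^2/2 + 2*a) := by
  have hD : ∀ t ∈ Icc a b, (p^2 + (y t)^2) ≠ 0 := fun t ht =>
    (add_pos_of_nonneg_of_pos (sq_nonneg _) (pow_pos (hy t ht) 2)).ne'
  have hyne : ∀ t ∈ Icc a b, y t ≠ 0 := fun t ht => (hy t ht).ne'
  have hlogc : ContinuousOn (fun s => Real.log (y s)) (Icc a b) := hyc.log hyne
  constructor
  · have := const_of_deriv_zero' (f := fun s => x s + p * Real.log (y s)) hab
      (hxc.add (hlogc.const_smul p)) (fun t ht => ?_)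
    · exact this
    · have H := (hdx t ht).add (((hdy t ht).log (hyne t ht)).const_mul p)
      refine H.congr_deriv ?_
      have h1 := hD t ht
      have h2 := hyne t ht
      field_simp
      ring
  · have := const_of_deriv_zero'
      (f := fun s => p^2 * Real.log (y s) + (y s)^2/2 + 2*s) hab
      (((hlogc.const_smul (p^2)).add ((hyc.pow 2).div_const 2)).add (by fun_prop))
      (fun t ht => ?_)
    · exact this
    · have H := ((((hdy t ht).log (hyne t ht)).const_mul (p^2)).add
        (((hdy t ht).pow 2).div_const 2)).add ((hasDerivWithinAt_id t _).const_mul 2)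
      refine H.congr_deriv ?_
      have h1 := hD t ht
      have h2 := hyne t ht
      field_simp
      ring

theorem stmt_14 (c p T t₁ t₂ : ℝ) (hc : 0 < c) (hp : c < p) (hT : 0 < T)
    (ht₁0 : 0 ≤ t₁) (ht₁₂ : t₁ ≤ t₂) (ht₂T : t₂ ≤ T) (x y : ℝ → ℝ)
    (hxc : ContinuousOn x (Set.Icc 0 T)) (hyc : ContinuousOn y (Set.Icc 0 T))
    (hy : ∀ t ∈ Set.Icc (0:ℝ) T, 0 < y t)
    (hx0 : x 0 = 0) (hy0 : y 0 = 1)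
    (hdx1 : ∀ t ∈ Set.Icc (0:ℝ) t₁,
      HasDerivWithinAt x (2 * (x t + c) / ((x t + c) ^ 2 + (y t) ^ 2)) (Set.Icc 0 t₁) t)
    (hdy1 : ∀ t ∈ Set.Icc (0:ℝ) t₁,
      HasDerivWithinAt y (-2 * y t / ((x t + c) ^ 2 + (y t) ^ 2)) (Set.Icc 0 t₁) t)
    (hdy2 : ∀ t ∈ Set.Icc t₁ t₂,
      HasDerivWithinAt y (-2 * y t / (p ^ 2 + (y t) ^ 2)) (Set.Icc t₁ t₂) t)
    (hdx2 : ∀ t ∈ Set.Icc t₁ t₂,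
      HasDerivWithinAt x (2 * p / (p ^ 2 + (y t) ^ 2)) (Set.Icc t₁ t₂) t)
    (hdx3 : ∀ t ∈ Set.Icc t₂ T,
      HasDerivWithinAt x (2 * (x t - c) / ((x t - c) ^ 2 + (y t) ^ 2)) (Set.Icc t₂ T) t)
    (hdy3 : ∀ t ∈ Set.Icc t₂ T,
      HasDerivWithinAt y (-2 * y t / ((x t - c) ^ 2 + (y t) ^ 2)) (Set.Icc t₂ T) t)
    (hxt₁ : x t₁ = p - c) (hxt₂ : x t₂ = c + p) :
    4 * c * p + (x T - c) ^ 2 - (y T) ^ 2 - 4 * T = c ^ 2 - 1 ∧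
    -p * Real.log ((x T - c) * y T / c) = 2 * c ∧
    4 * t₂ = 1 - c ^ 2 + 4 * p * c + p ^ 2 - (x T - c) ^ 2 * (y T) ^ 2 / p ^ 2 := by
  have hp0 : 0 < p := hc.trans hp
  have ht₂0 : 0 ≤ t₂ := ht₁0.trans ht₁₂
  have ht₁T : t₁ ≤ T := ht₁₂.trans ht₂T
  have hs1 : Icc (0:ℝ) t₁ ⊆ Icc 0 T := Icc_subset_Icc le_rfl ht₁T
  have hs2 : Icc t₁ t₂ ⊆ Icc 0 T := Icc_subset_Icc ht₁0 ht₂T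
  have hs3 : Icc t₂ T ⊆ Icc 0 T := Icc_subset_Icc ht₂0 le_rfl
  -- phase 1
  obtain ⟨eqA, eqB⟩ := phaseA x y 0 t₁ c ht₁0 (hxc.mono hs1) (hyc.mono hs1)
    (fun t ht => hy t (hs1 ht)) (fun t ht => hdx1 t ht) (fun t ht => hdy1 t ht)
  -- phase 2
  obtain ⟨eqC, eqE⟩ := phaseB x y t₁ t₂ p ht₁₂ (hxc.mono hs2) (hyc.mono hs2)
    (fun t ht => hy t (hs2 ht)) (fun t ht => hdx2 t ht) (fun t ht => hdy2 t ht)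
  -- phase 3
  obtain ⟨eqF, eqG⟩ := phaseA x y t₂ T (-c) ht₂T (hxc.mono hs3) (hyc.mono hs3)
    (fun t ht => hy t (hs3 ht))
    (fun t ht => by convert hdx3 t ht using 2 <;> ring)
    (fun t ht => by convert hdy3 t ht using 2 <;> ring)
  rw [hx0, hy0] at eqA eqB
  rw [hxt₁] at eqA eqB eqC
  rw [hxt₂] at eqC eqF eqG
  -- key positivities
  have hY1 : 0 < y t₁ := hy t₁ ⟨ht₁0, ht₁T⟩
  have hY2 : 0 < y t₂ := hy t₂ ⟨ht₂0, ht₂T⟩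
  have hYT : 0 < y T := hy T ⟨le_of_lt hT, le_rfl⟩
  -- y t₁ = c / p
  have hyt₁ : p * y t₁ = c := by linear_combination eqB
  -- p² (log y t₁ - log y t₂) = 2 c p
  have hlog : p * Real.log (y t₁) - p * Real.log (y t₂) = 2 * c := by linear_combination -eqC
  have hlog2 : p^2 * Real.log (y t₁) - p^2 * Real.log (y t₂) = 2 * c * p := by
    linear_combination p * hlog
  -- main square-quantities relations
  have hG : (x T - c) * y T = p * y t₂ := by linear_combination eqG
  have hG2 : (x T - c)^2 * (y T)^2 = p^2 * (y t₂)^2 := by linear_combination ((x T - c)*y T + p*y t₂) * hG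
  have h4t₂ : 4 * t₂ = 1 - c^2 + 4*p*c + p^2 - (y t₂)^2 := by linear_combination 2*eqE + 2*hlog2 - eqA
  have goal1 : 4 * c * p + (x T - c) ^ 2 - (y T) ^ 2 - 4 * T = c ^ 2 - 1 := by
    linear_combination eqF - h4t₂
  have hdiv : (x T - c)^2 * (y T)^2 / p^2 = (y t₂)^2 := by
    rw [hG2]; field_simp
  have goal3 : 4 * t₂ = 1 - c ^ 2 + 4 * p * c + p ^ 2 - (x T - c) ^ 2 * (y T) ^ 2 / p ^ 2 := by
    rw [hdiv]; linarith [h4t₂]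
  refine ⟨goal1, ?_, goal3⟩
  -- log goal
  have hXc : (x T - c) * y T / c = p * y t₂ / c := by rw [hG]
  rw [hXc]
  have hl1 : Real.log (p * y t₂ / c) = Real.log p + Real.log (y t₂) - Real.log c := by
    rw [Real.log_div (by positivity) hc.ne', Real.log_mul hp0.ne' hY2.ne']
  have hl2 : Real.log (y t₁) = Real.log c - Real.log p := by
    have : y t₁ = c / p := by field_simp; linarith [hyt₁]
    rw [this, Real.log_div hc.ne' hp0.ne']
  rw [hl1]
  have : Real.log (y t₂) = Real.log (y t₁) - 2 * c / p := by
    field_simp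
    linarith [hlog]
  rw [this, hl2]
  field_simp
  ring
end

section
/- Let c > 0, μ ∈ [0, 1], T > 0, and let z : [0, T] → ℂ be differentiable with Im z(t) > 0 for all t, z(0) = i, and z'(t) = 2μ/(z(t) − c) + 2(1−μ)/(z(t) + c) for all t ∈ [0, T]. Then z(T)² + 1 − 2c(2μ−1)·(z(T) − i) + 8μc²(μ−1)·( Log(z(T) + c(2μ−1)) − Log(i + c(2μ−1)) ) = 4T, where Log denotes the principal branch of the complex logarithm. -/
theorem stmt_16 (c μ T : ℝ) (hc : 0 < c) (hμ : μ ∈ Set.Icc (0:ℝ) 1) (hT : 0 < T)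
    (z : ℝ → ℂ)
    (him : ∀ t ∈ Set.Icc (0:ℝ) T, 0 < (z t).im)
    (hz0 : z 0 = Complex.I)
    (hdz : ∀ t ∈ Set.Icc (0:ℝ) T,
      HasDerivWithinAt z (2 * μ / (z t - c) + 2 * (1 - μ) / (z t + c)) (Set.Icc 0 T) t) :
    (z T) ^ 2 + 1 - 2 * c * (2 * μ - 1) * (z T - Complex.I) +
      8 * μ * c ^ 2 * (μ - 1) *
        (Complex.log (z T + c * (2 * μ - 1)) - Complex.log (Complex.I + c * (2 * μ - 1)))
      = 4 * T := by
  set a : ℂ := (c : ℂ) * (2 * μ - 1) with ha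
  set g : ℝ → ℂ := fun t => (z t) ^ 2 - 2 * c * (2 * μ - 1) * (z t)
      + 8 * μ * c ^ 2 * (μ - 1) * Complex.log (z t + a) - 4 * (t : ℂ) with hg
  have key : ∀ t ∈ Set.Icc (0:ℝ) T, HasDerivWithinAt g 0 (Set.Icc 0 T) t := by
    intro t ht
    have hzim := him t ht
    have hz := hdz t ht
    set z' : ℂ := 2 * μ / (z t - c) + 2 * (1 - μ) / (z t + c) with hz'
    have h1 : z t - (c:ℂ) ≠ 0 := fun h =>
      hzim.ne' (by simpa using congrArg Complex.im h)
    have h2 : z t + (c:ℂ) ≠ 0 := fun h =>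
      hzim.ne' (by simpa using congrArg Complex.im h)
    have h3 : z t + a ≠ 0 := fun h =>
      hzim.ne' (by simpa [ha] using congrArg Complex.im h)
    have hslit : z t + a ∈ Complex.slitPlane := by
      rw [Complex.mem_slitPlane_iff]
      right
      simpa [ha] using hzim.ne'
    have hsq : HasDerivWithinAt (fun s => (z s) ^ 2) (z' * z t + z t * z') (Set.Icc 0 T) t := by
      have hmul := hz.mul hz
      simp only [pow_two]
      exact hmul
    have hlin : HasDerivWithinAt (fun s => 2 * (c:ℂ) * (2 * μ - 1) * (z s))
        (2 * c * (2 * μ - 1) * z') (Set.Icc 0 T) t :=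
      HasDerivWithinAt.const_mul (2 * (c:ℂ) * (2 * μ - 1)) hz
    have hlg : HasDerivWithinAt (fun s : ℝ => Complex.log (z s + a))
        (z' / (z t + a)) (Set.Icc 0 T) t := (hz.add_const a).clog_real hslit
    have hlog : HasDerivWithinAt (fun s : ℝ => 8 * (μ:ℂ) * c ^ 2 * (μ - 1) * Complex.log (z s + a))
        (8 * μ * c ^ 2 * (μ - 1) * (z' / (z t + a))) (Set.Icc 0 T) t :=
      HasDerivWithinAt.const_mul (8 * (μ:ℂ) * c ^ 2 * (μ - 1)) hlg
    have h4t : HasDerivWithinAt (fun s : ℝ => 4 * (s : ℂ)) 4 (Set.Icc 0 T) t := by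
      simpa using (Complex.ofRealCLM.hasDerivAt (x := t)).hasDerivWithinAt.const_mul (4:ℂ)
    have hD : HasDerivWithinAt g
        (z' * z t + z t * z' - 2 * c * (2 * μ - 1) * z'
          + 8 * μ * c ^ 2 * (μ - 1) * (z' / (z t + a)) - 4) (Set.Icc 0 T) t :=
      ((hsq.sub hlin).add hlog).sub h4t
    have hval : (z' * z t + z t * z' - 2 * (c:ℂ) * (2 * μ - 1) * z'
          + 8 * μ * c ^ 2 * (μ - 1) * (z' / (z t + a)) - 4) = 0 := by
      rw [hz', ha]
      have h3' : z t + (c:ℂ) * (2 * μ - 1) ≠ 0 := h3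
      field_simp
      ring
    rwa [hval] at hD
  have hdiff : DifferentiableOn ℝ g (Set.Icc 0 T) :=
    fun t ht => (key t ht).differentiableWithinAt
  have hderiv0 : ∀ x ∈ Set.Ico (0:ℝ) T, derivWithin g (Set.Icc 0 T) x = 0 := fun x hx =>
    (key x (Set.mem_Icc_of_Ico hx)).derivWithin (uniqueDiffOn_Icc hT x (Set.mem_Icc_of_Ico hx))
  have hTg : g T = g 0 :=
    constant_of_derivWithin_zero hdiff hderiv0 T (Set.right_mem_Icc.2 hT.le)
  simp only [hg, hz0, Complex.ofReal_zero, mul_zero, sub_zero, Complex.I_sq] at hTg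
  linear_combination hTg
end
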